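/- arXiv:1002.4231 — 3 statements merged into one kernel-verified Lean document; each statement's English description precedes it below -/
import Mathlib

section
/- Suppose that p ≥ 3, that (p : ℤ) - q + r = 2, that c j ≥ 3 for every j, that ∑ j, c j = 2*q, and that 3*(p : ℤ) - q - 6 = 1. Then there exists an index j₀ with c j₀ = 4 and c j = 3 for every j ≠ j₀; that is, exactly one face is 4-sided and all other faces are 3-sided. -/
/-- If `p ≥ 3`, `p - q + r = 2`, every face size is at least 3, the face sizes sum to `2q`,
and `d = 3p - q - 6 = 1`, then exactly one face is 4-sided and all others are 3-sided. -/
theorem faces_of_d_eq_one (p q r : ℕ) (c : Fin r → ℕ)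
    (hp : 3 ≤ p)
    (heuler : (p : ℤ) - q + r = 2)
    (hc : ∀ j, 3 ≤ c j)
    (hsum : ∑ j, c j = 2 * q)
    (hd : 3 * (p : ℤ) - q - 6 = 1) :
    ∃ j₀, c j₀ = 4 ∧ ∀ j, j ≠ j₀ → c j = 3 := by
  have key : ∑ j, (c j - 3) = 1 := by
    have h1 : ∑ j, ((c j : ℤ) - 3) = 1 := by
      have hsum' : ∑ j, ((c j : ℤ)) = 2 * q := by exact_mod_cast hsum
      rw [Finset.sum_sub_distrib, hsum', Finset.sum_const, Finset.card_univ,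
        Fintype.card_fin]
      rw [nsmul_eq_mul]
      push_cast
      linarith
    have h2 : ((∑ j, (c j - 3) : ℕ) : ℤ) = 1 := by
      rw [Nat.cast_sum]
      simp_rw [Nat.cast_sub (hc _)]
      exact h1
    exact_mod_cast h2
  obtain ⟨j₀, hj₀⟩ : ∃ j₀, c j₀ - 3 ≠ 0 := by
    by_contra h
    push_neg at h
    simp [h] at key
  refine ⟨j₀, ?_, ?_⟩
  · have h1 : c j₀ - 3 ≤ 1 := key ▸
      Finset.single_le_sum (f := fun j => c j - 3) (fun i _ => Nat.zero_le _)
        (Finset.mem_univ j₀)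
    have := hc j₀
    omega
  · intro j hj
    have h2 : ∑ i ∈ ({j₀, j} : Finset (Fin r)), (c i - 3) ≤ 1 := key ▸
      Finset.sum_le_sum_of_subset (Finset.subset_univ _)
    rw [Finset.sum_pair (Ne.symm hj)] at h2
    have := hc j
    omega
end

section
/- Suppose that p ≥ 3, that (p : ℤ) - q + r = 2, that c j ≥ 3 for every j, that ∑ j, c j = 2*q, and that 3*(p : ℤ) - q - 6 = 2. Then either (a) there exists an index j₀ with c j₀ = 5 and c j = 3 for every j ≠ j₀, or (b) there exist distinct indices j₀ ≠ j₁ with c j₀ = 4, c j₁ = 4, and c j = 3 for every j ∉ {j₀, j₁}; that is, either one face is 5-sided and the rest are 3-sided, or exactly two faces are 4-sided and the rest are 3-sided. -/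
lemma sum_eq_two_cases {n : ℕ} (e : Fin n → ℕ) (h : ∑ j, e j = 2) :
    (∃ j₀, e j₀ = 2 ∧ ∀ j, j ≠ j₀ → e j = 0) ∨
      (∃ j₀ j₁, j₀ ≠ j₁ ∧ e j₀ = 1 ∧ e j₁ = 1 ∧ ∀ j, j ≠ j₀ → j ≠ j₁ → e j = 0) := by
  have hne : ∃ j₀ : Fin n, e j₀ ≠ 0 := by
    by_contra hcon
    push_neg at hcon
    simp [hcon] at h
  obtain ⟨j₀, hj₀⟩ := hne
  have hmem : j₀ ∈ Finset.univ := Finset.mem_univ j₀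
  have hsplit := Finset.add_sum_erase Finset.univ e hmem
  rw [h] at hsplit
  have hle : e j₀ ≤ 2 := by omega
  interval_cases h0 : e j₀
  · exact absurd rfl hj₀
  · -- e j₀ = 1, erase sum = 1
    have hrest : ∑ j ∈ Finset.univ.erase j₀, e j = 1 := by omega
    have hne1 : ∃ j₁ ∈ Finset.univ.erase j₀, e j₁ ≠ 0 := by
      by_contra hcon
      push_neg at hcon
      rw [Finset.sum_eq_zero hcon] at hrest
      omega
    obtain ⟨j₁, hj₁mem, hj₁⟩ := hne1
    have hsplit2 := Finset.add_sum_erase _ e hj₁mem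
    rw [hrest] at hsplit2
    have hj₁1 : e j₁ = 1 := by omega
    have hrest2 : ∑ j ∈ (Finset.univ.erase j₀).erase j₁, e j = 0 := by omega
    right
    refine ⟨j₀, j₁, ?_, h0, hj₁1, ?_⟩
    · exact fun hEq => (Finset.mem_erase.mp hj₁mem).1 hEq.symm
    · intro j hja hjb
      exact Finset.sum_eq_zero_iff.mp hrest2 j
        (Finset.mem_erase.mpr ⟨hjb, Finset.mem_erase.mpr ⟨hja, Finset.mem_univ j⟩⟩)
  · left
    refine ⟨j₀, h0, fun j hj => ?_⟩
    have hrest : ∑ j ∈ Finset.univ.erase j₀, e j = 0 := by omega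
    exact Finset.sum_eq_zero_iff.mp hrest j (Finset.mem_erase.mpr ⟨hj, Finset.mem_univ j⟩)

/-- If `p ≥ 3`, `p - q + r = 2`, every face size is at least 3, the face sizes sum to `2q`,
and `d = 3p - q - 6 = 2`, then either one face is 5-sided and the rest are 3-sided, or
exactly two faces are 4-sided and the rest are 3-sided. -/
theorem faces_of_d_eq_two (p q r : ℕ) (c : Fin r → ℕ)
    (hp : 3 ≤ p)
    (heuler : (p : ℤ) - q + r = 2)
    (hc : ∀ j, 3 ≤ c j)
    (hsum : ∑ j, c j = 2 * q)
    (hd : 3 * (p : ℤ) - q - 6 = 2) :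
    (∃ j₀, c j₀ = 5 ∧ ∀ j, j ≠ j₀ → c j = 3) ∨
      (∃ j₀ j₁, j₀ ≠ j₁ ∧ c j₀ = 4 ∧ c j₁ = 4 ∧ ∀ j, j ≠ j₀ → j ≠ j₁ → c j = 3) := by
  set e : Fin r → ℕ := fun j => c j - 3 with he
  have hsumZ : (∑ j, c j : ℤ) = 2 * q := by exact_mod_cast congrArg (Nat.cast : ℕ → ℤ) hsum
  have hcast : (∑ j, c j : ℤ) = ∑ j, (c j : ℤ) := by push_cast; ring
  have hes : ∑ j, e j = 2 := by
    have h1 : (∑ j, (e j : ℤ)) = ∑ j, ((c j : ℤ) - 3) := by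
      refine Finset.sum_congr rfl fun j _ => ?_
      have := hc j
      simp [he]
      omega
    have h2 : ∑ j, ((c j : ℤ) - 3) = (∑ j, (c j : ℤ)) - 3 * r := by
      rw [Finset.sum_sub_distrib]
      simp [mul_comm]
    have h3 : (∑ j, (e j : ℤ)) = 2 := by
      rw [h1, h2, ← hcast, hsumZ]; linarith
    have h4 : ((∑ j, e j : ℕ) : ℤ) = 2 := by push_cast; exact h3
    exact_mod_cast h4
  rcases sum_eq_two_cases e hes with ⟨j₀, h0, hrest⟩ | ⟨j₀, j₁, hne, h0, h1, hrest⟩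
  · left
    refine ⟨j₀, ?_, fun j hj => ?_⟩
    · have := hc j₀; simp [he] at h0; omega
    · have := hc j; have := hrest j hj; simp [he] at this; omega
  · right
    refine ⟨j₀, j₁, hne, ?_, ?_, fun j hja hjb => ?_⟩
    · have := hc j₀; simp [he] at h0; omega
    · have := hc j₁; simp [he] at h1; omega
    · have := hc j; have := hrest j hja hjb; simp [he] at this; omega
end

section
/- Suppose that p ≥ 3, that (p : ℤ) - q + r = 2, that c j ≥ 3 for every j, that ∑ j, c j = 2*q, and that 3*(p : ℤ) - q - 6 = 3. Then exactly one of the following holds: (a) there exists an index j₀ with c j₀ = 6 and c j = 3 for every j ≠ j₀; or (b) there exist distinct indices j₀ ≠ j₁ with c j₀ = 5, c j₁ = 4, and c j = 3 for every j ∉ {j₀, j₁}; or (c) there exist pairwise distinct indices j₀, j₁, j₂ with c j₀ = c j₁ = c j₂ = 4 and c j = 3 for every j ∉ {j₀, j₁, j₂}. -/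
lemma sum_eq_three_cases {n : ℕ} (f : Fin n → ℕ) (h : ∑ j, f j = 3) :
    (∃ a, f a = 3 ∧ ∀ b, b ≠ a → f b = 0) ∨
    (∃ a b, a ≠ b ∧ f a = 2 ∧ f b = 1 ∧ ∀ j, j ≠ a → j ≠ b → f j = 0) ∨
    (∃ a b c, a ≠ b ∧ a ≠ c ∧ b ≠ c ∧ f a = 1 ∧ f b = 1 ∧ f c = 1 ∧
      ∀ j, j ≠ a → j ≠ b → j ≠ c → f j = 0) := by
  obtain ⟨a, -, ha⟩ := Finset.exists_ne_zero_of_sum_ne_zero (s := Finset.univ) (f := f)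
    (by rw [h]; omega)
  have hA : f a + ∑ j ∈ Finset.univ.erase a, f j = 3 := by
    rw [Finset.add_sum_erase _ f (Finset.mem_univ a)]; exact h
  have hfa3 : f a ≤ 3 := by omega
  interval_cases hfa : f a
  · omega
  · -- f a = 1, rest sums to 2
    have h2 : ∑ j ∈ Finset.univ.erase a, f j = 2 := by omega
    obtain ⟨b, hbmem, hb⟩ := Finset.exists_ne_zero_of_sum_ne_zero (f := f) (by rw [h2]; omega)
    have hba : b ≠ a := Finset.ne_of_mem_erase hbmem
    have hB : f b + ∑ j ∈ (Finset.univ.erase a).erase b, f j = 2 := by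
      rw [Finset.add_sum_erase _ f hbmem]; exact h2
    have hfb2 : f b ≤ 2 := by omega
    interval_cases hfb : f b
    · omega
    · -- f b = 1, need third
      have h1 : ∑ j ∈ (Finset.univ.erase a).erase b, f j = 1 := by omega
      obtain ⟨d, hdmem, hd⟩ := Finset.exists_ne_zero_of_sum_ne_zero (f := f) (by rw [h1]; omega)
      have hdb : d ≠ b := Finset.ne_of_mem_erase hdmem
      have hda : d ≠ a := Finset.ne_of_mem_erase (Finset.mem_of_mem_erase hdmem)
      have hC : f d + ∑ j ∈ ((Finset.univ.erase a).erase b).erase d, f j = 1 := by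
        rw [Finset.add_sum_erase _ f hdmem]; exact h1
      have hrest : ∀ j ∈ ((Finset.univ.erase a).erase b).erase d, f j = 0 := by
        rw [← Finset.sum_eq_zero_iff]; omega
      refine Or.inr (Or.inr ⟨a, b, d, hba.symm, hda.symm, hdb.symm, hfa, hfb, by omega, ?_⟩)
      intro j hja hjb hjd
      exact hrest j (by simp [Finset.mem_erase, hja, hjb, hjd])
    · -- f b = 2, f a = 1 : case (2,1)
      have hrest : ∀ j ∈ (Finset.univ.erase a).erase b, f j = 0 := by
        rw [← Finset.sum_eq_zero_iff]; omega
      refine Or.inr (Or.inl ⟨b, a, hba, hfb, hfa, ?_⟩)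
      intro j hjb hja
      exact hrest j (by simp [Finset.mem_erase, hja, hjb])
  · -- f a = 2, rest sums to 1
    have h1 : ∑ j ∈ Finset.univ.erase a, f j = 1 := by omega
    obtain ⟨b, hbmem, hb⟩ := Finset.exists_ne_zero_of_sum_ne_zero (f := f) (by rw [h1]; omega)
    have hba : b ≠ a := Finset.ne_of_mem_erase hbmem
    have hB : f b + ∑ j ∈ (Finset.univ.erase a).erase b, f j = 1 := by
      rw [Finset.add_sum_erase _ f hbmem]; exact h1
    have hrest : ∀ j ∈ (Finset.univ.erase a).erase b, f j = 0 := by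
      rw [← Finset.sum_eq_zero_iff]; omega
    refine Or.inr (Or.inl ⟨a, b, hba.symm, hfa, by omega, ?_⟩)
    intro j hja hjb
    exact hrest j (by simp [Finset.mem_erase, hja, hjb])
  · -- f a = 3
    have hrest : ∀ j ∈ Finset.univ.erase a, f j = 0 := by
      rw [← Finset.sum_eq_zero_iff]; omega
    exact Or.inl ⟨a, hfa, fun b hb => hrest b (by simp [Finset.mem_erase, hb])⟩

/-- If `p ≥ 3`, `p - q + r = 2`, every face size is at least 3, the face sizes sum to `2q`,
and `d = 3p - q - 6 = 3`, then either one face is 6-sided and the rest are 3-sided, or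
one face is 5-sided, another is 4-sided and the rest are 3-sided, or exactly three faces
are 4-sided and the rest are 3-sided. (These three alternatives are mutually exclusive.) -/
theorem faces_of_d_eq_three (p q r : ℕ) (c : Fin r → ℕ)
    (hp : 3 ≤ p)
    (heuler : (p : ℤ) - q + r = 2)
    (hc : ∀ j, 3 ≤ c j)
    (hsum : ∑ j, c j = 2 * q)
    (hd : 3 * (p : ℤ) - q - 6 = 3) :
    (∃ j₀, c j₀ = 6 ∧ ∀ j, j ≠ j₀ → c j = 3) ∨
      (∃ j₀ j₁, j₀ ≠ j₁ ∧ c j₀ = 5 ∧ c j₁ = 4 ∧ ∀ j, j ≠ j₀ → j ≠ j₁ → c j = 3) ∨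
      (∃ j₀ j₁ j₂, j₀ ≠ j₁ ∧ j₀ ≠ j₂ ∧ j₁ ≠ j₂ ∧
        c j₀ = 4 ∧ c j₁ = 4 ∧ c j₂ = 4 ∧ ∀ j, j ≠ j₀ → j ≠ j₁ → j ≠ j₂ → c j = 3) := by
  have hq : q = 3 * p - 9 := by omega
  have hr : r = 2 * p - 7 := by omega
  have hsum' : ∑ j, (c j - 3) + 3 * r = ∑ j, c j := by
    have : 3 * r = ∑ _j : Fin r, 3 := by simp [Finset.sum_const, mul_comm]
    calc ∑ j, (c j - 3) + 3 * r = ∑ j, ((c j - 3) + 3) := by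
          rw [this, ← Finset.sum_add_distrib]
      _ = ∑ j, c j := Finset.sum_congr rfl fun j _ => by have := hc j; omega
  have h3 : ∑ j, (c j - 3) = 3 := by omega
  rcases sum_eq_three_cases _ h3 with ⟨a, ha, hrest⟩ | ⟨a, b, hab, ha, hb, hrest⟩ |
    ⟨a, b, d, hab, had, hbd, ha, hb, hd', hrest⟩
  · exact Or.inl ⟨a, by have := hc a; omega,
      fun j hj => by have := hrest j hj; have := hc j; omega⟩
  · exact Or.inr (Or.inl ⟨a, b, hab, by have := hc a; omega, by have := hc b; omega,
      fun j h1 h2 => by have := hrest j h1 h2; have := hc j; omega⟩)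
  · exact Or.inr (Or.inr ⟨a, b, d, hab, had, hbd, by have := hc a; omega,
      by have := hc b; omega, by have := hc d; omega,
      fun j h1 h2 h3 => by have := hrest j h1 h2 h3; have := hc j; omega⟩)
end
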